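/- arXiv:2303.06726 — 4 statements merged into one kernel-verified Lean document; each statement's English description precedes it below -/
import Mathlib

section
/- Let σ : ℝ → ℝ be bounded and differentiable with σ(0) = 0 and σ′(0) ≠ 0, and assume its derivative σ′ is K-bounded and K-Lipschitz for some K > 0. Let Φ ⊆ L²(μ) ∩ L^∞(μ) be star-shaped at 0, with every φ ∈ Φ essentially bounded. If the linear span of Φ is dense in L²(μ), then the linear span of {σ ∘ φ : φ ∈ Φ} is dense in L²(μ). -/
/-!
By the mean value theorem applied to `u ↦ σ u - σ'(0) u`, whose derivative is `K |u|`-bounded on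
`[-|u|, |u|]`, we have `|σ u - σ'(0) u| ≤ K u²`. If `|φ| ≤ C` a.e. this gives
`|t⁻¹ σ(t φ) - σ'(0) φ| ≤ K C² t` a.e., so `t⁻¹ • σ ∘ (t • φ) → σ'(0) • φ` in `L²(μ)` as `t → 0⁺`.
For `t ≤ 1` these functions lie in the span of `{σ ∘ ψ : ψ ∈ Φ}` by star-shapedness, so `Φ`, and
with it the dense span of `Φ`, lies in the closure of that span.
-/

open MeasureTheory Filter Topology

theorem abs_sub_sub_deriv_mul_le_of_lipschitzWith_deriv {f : ℝ → ℝ} {K : NNReal}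
    (hf : Differentiable ℝ f) (hf' : LipschitzWith K (deriv f)) (u : ℝ) :
    |f u - f 0 - deriv f 0 * u| ≤ K * u ^ 2 := by
  set F : ℝ → ℝ := fun x => f x - deriv f 0 * x
  have hF : ∀ x, HasDerivAt F (deriv f x - deriv f 0) x := fun x =>
    (hf x).hasDerivAt.sub ((hasDerivAt_id x).const_mul _ |>.congr_deriv (mul_one _))
  have hF' : ∀ x ∈ Set.uIcc 0 u, ‖deriv F x‖ ≤ K * |u| := fun x hx =>
    calc ‖deriv F x‖ = dist (deriv f x) (deriv f 0) := by rw [(hF x).deriv]; rfl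
      _ ≤ K * dist x 0 := hf'.dist_le_mul x 0
      _ ≤ K * |u| := by
        gcongr
        simpa [Real.dist_eq] using Set.abs_sub_left_of_mem_uIcc hx
  have := Convex.norm_image_sub_le_of_norm_deriv_le (fun x _ => (hF x).differentiableAt) hF'
    (convex_uIcc 0 u) Set.left_mem_uIcc Set.right_mem_uIcc
  calc |f u - f 0 - deriv f 0 * u| = ‖F u - F 0‖ := by
        rw [Real.norm_eq_abs]
        congr 1
        simp only [F]
        ring
    _ ≤ K * |u| * ‖u - 0‖ := this
    _ = K * u ^ 2 := by rw [sub_zero, Real.norm_eq_abs, mul_assoc, abs_mul_abs_self, sq]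

theorem abs_inv_mul_sub_deriv_mul_le {σ : ℝ → ℝ} {K : NNReal} (hσ : Differentiable ℝ σ)
    (hσ0 : σ 0 = 0) (hσ' : LipschitzWith K (deriv σ)) {t v C : ℝ} (ht : 0 < t) (hv : |v| ≤ C) :
    |t⁻¹ * σ (t * v) - deriv σ 0 * v| ≤ K * C ^ 2 * t := by
  have hv2 : v ^ 2 ≤ C ^ 2 := sq_le_sq' (abs_le.1 hv).1 (abs_le.1 hv).2
  have hrescale : t⁻¹ * σ (t * v) - deriv σ 0 * v
      = t⁻¹ * (σ (t * v) - σ 0 - deriv σ 0 * (t * v)) := by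
    rw [hσ0]
    field_simp
    ring
  calc |t⁻¹ * σ (t * v) - deriv σ 0 * v|
      = t⁻¹ * |σ (t * v) - σ 0 - deriv σ 0 * (t * v)| := by
        rw [hrescale, abs_mul, abs_of_pos (inv_pos.2 ht)]
    _ ≤ t⁻¹ * (K * (t * v) ^ 2) := by
        gcongr
        exact abs_sub_sub_deriv_mul_le_of_lipschitzWith_deriv hσ hσ' _
    _ = K * v ^ 2 * t := by field_simp
    _ ≤ K * C ^ 2 * t := by gcongr

section

variable {α : Type*} [MeasurableSpace α] {μ : Measure α} [IsFiniteMeasure μ]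
  {p : ENNReal} [Fact (1 ≤ p)]

theorem tendsto_inv_smul_comp_smul {σ : ℝ → ℝ} {K : NNReal} (hσ : Differentiable ℝ σ)
    (hσ0 : σ 0 = 0) (hσ' : LipschitzWith K (deriv σ)) {φ : Lp ℝ p μ} {C : ℝ}
    (hφ : ∀ᵐ x ∂μ, |φ x| ≤ C) (g : ℝ → Lp ℝ p μ) (hg : ∀ t, g t =ᵐ[μ] fun x => σ (t * φ x)) :
    Tendsto (fun t => t⁻¹ • g t) (𝓝[>] 0) (𝓝 (deriv σ 0 • φ)) := by
  set A : ℝ := measureUnivNNReal μ ^ p.toReal⁻¹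
  have hbound : ∀ t > 0, ‖t⁻¹ • g t - deriv σ 0 • φ‖ ≤ A * (K * C ^ 2 * t) := fun t ht => by
    refine Lp.norm_le_of_ae_bound (by positivity) ?_
    filter_upwards [hφ, hg t, Lp.coeFn_sub (t⁻¹ • g t) (deriv σ 0 • φ),
      Lp.coeFn_smul t⁻¹ (g t), Lp.coeFn_smul (deriv σ 0) φ] with x hx hgx hsub hgsmul hφsmul
    rw [hsub, Pi.sub_apply, hgsmul, hφsmul, Pi.smul_apply, Pi.smul_apply, hgx, smul_eq_mul,
      smul_eq_mul, Real.norm_eq_abs]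
    exact abs_inv_mul_sub_deriv_mul_le hσ hσ0 hσ' ht hx
  have hlim : Tendsto (fun t : ℝ => A * (K * C ^ 2 * t)) (𝓝[>] 0) (𝓝 0) := by
    refine tendsto_nhdsWithin_of_tendsto_nhds ?_
    simpa using ((continuous_const.mul continuous_id).tendsto (0 : ℝ)).const_mul A
  rw [tendsto_iff_norm_sub_tendsto_zero]
  exact squeeze_zero' (Eventually.of_forall fun _ => norm_nonneg _)
    (eventually_mem_nhdsWithin.mono hbound) hlim

theorem smul_mem_closure_span_comp {σ : ℝ → ℝ} {K : NNReal} {M : ℝ} (hσ : Differentiable ℝ σ)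
    (hσ0 : σ 0 = 0) (hσ' : LipschitzWith K (deriv σ)) (hM : ∀ x, |σ x| ≤ M) {Φ : Set (Lp ℝ p μ)}
    (hΦ : ∀ φ ∈ Φ, ∀ c : ℝ, 0 ≤ c → c ≤ 1 → c • φ ∈ Φ) {φ : Lp ℝ p μ} (hφΦ : φ ∈ Φ)
    (hφ : MemLp φ ⊤ μ) :
    deriv σ 0 • φ ∈ closure (Submodule.span ℝ {g : Lp ℝ p μ | ∃ ψ ∈ Φ, g =ᵐ[μ] fun x => σ (ψ x)} :
      Set (Lp ℝ p μ)) := by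
  have hmem : ∀ t : ℝ, MemLp (fun x => σ ((t • φ : Lp ℝ p μ) x)) p μ := fun t =>
    .of_bound (hσ.continuous.comp_aestronglyMeasurable (Lp.aestronglyMeasurable _)) M
      (Eventually.of_forall fun x => hM _)
  set g : ℝ → Lp ℝ p μ := fun t => (hmem t).toLp
  have hg : ∀ t, g t =ᵐ[μ] fun x => σ (t * φ x) := fun t => by
    filter_upwards [(hmem t).coeFn_toLp, Lp.coeFn_smul t φ] with x hgx hφx
    rw [hgx, hφx, Pi.smul_apply, smul_eq_mul]
  refine mem_closure_of_tendsto
    (tendsto_inv_smul_comp_smul hσ hσ0 hσ' (C := lpNorm φ ⊤ μ)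
      (by simpa only [Real.norm_eq_abs] using ae_le_lpNorm_exponent_top hφ) g hg) ?_
  filter_upwards [Ioc_mem_nhdsGT one_pos] with t ht
  exact Submodule.smul_mem _ _ (Submodule.subset_span
    ⟨t • φ, hΦ φ hφΦ t ht.1.le ht.2, (hmem t).coeFn_toLp⟩)

end

theorem statement0_general
    (d' : ℕ) (μ : Measure (EuclideanSpace ℝ (Fin d'))) [IsProbabilityMeasure μ]
    (σ : ℝ → ℝ) (K : ℝ)
    (hσbdd : ∃ M : ℝ, ∀ x : ℝ, |σ x| ≤ M)
    (hσdiff : Differentiable ℝ σ)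
    (hσ0 : σ 0 = 0) (hσ'0 : deriv σ 0 ≠ 0)
    (hσ'lip : LipschitzWith (Real.toNNReal K) (deriv σ))
    (Φ : Set (Lp ℝ 2 μ))
    (hΦesbdd : ∀ φ ∈ Φ, MemLp (φ : EuclideanSpace ℝ (Fin d') → ℝ) ⊤ μ)
    (hΦstar : ∀ φ ∈ Φ, ∀ c : ℝ, 0 ≤ c → c ≤ 1 → c • φ ∈ Φ)
    (hdense : Dense ((Submodule.span ℝ Φ : Submodule ℝ (Lp ℝ 2 μ)) : Set (Lp ℝ 2 μ))) :
    Dense ((Submodule.span ℝ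
        {g : Lp ℝ 2 μ | ∃ φ ∈ Φ,
          (g : EuclideanSpace ℝ (Fin d') → ℝ) =ᵐ[μ] fun x => σ (φ x)} :
        Submodule ℝ (Lp ℝ 2 μ)) : Set (Lp ℝ 2 μ)) := by
  obtain ⟨M, hM⟩ := hσbdd
  set T := Submodule.span ℝ {g : Lp ℝ 2 μ | ∃ φ ∈ Φ,
    (g : EuclideanSpace ℝ (Fin d') → ℝ) =ᵐ[μ] fun x => σ (φ x)}
  have hΦT : ∀ φ ∈ Φ, φ ∈ T.topologicalClosure := fun φ hφ => by
    have hσφ := smul_mem_closure_span_comp hσdiff hσ0 hσ'lip hM hΦstar hφ (hΦesbdd φ hφ)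
    simpa only [smul_smul, inv_mul_cancel₀ hσ'0, one_smul] using
      T.topologicalClosure.smul_mem (deriv σ 0)⁻¹ hσφ
  rw [← dense_closure, ← T.topologicalClosure_coe]
  exact hdense.mono (Submodule.span_le.2 hΦT)

/-- Let `σ : ℝ → ℝ` be bounded and differentiable with `σ 0 = 0` and
`deriv σ 0 ≠ 0`, whose derivative is `K`-bounded and `K`-Lipschitz. Let `Φ ⊆ L²(μ) ∩ L^∞(μ)`
be star-shaped at `0`, with every `φ ∈ Φ` essentially bounded. If the linear span of `Φ` is
dense in `L²(μ)`, then so is the linear span of `{σ ∘ φ : φ ∈ Φ}`. -/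
theorem statement0
    (d' : ℕ) (μ : Measure (EuclideanSpace ℝ (Fin d'))) [IsProbabilityMeasure μ]
    (σ : ℝ → ℝ) (K : ℝ) (hK : 0 < K)
    (hσbdd : ∃ M : ℝ, ∀ x : ℝ, |σ x| ≤ M)
    (hσdiff : Differentiable ℝ σ)
    (hσ0 : σ 0 = 0) (hσ'0 : deriv σ 0 ≠ 0)
    (hσ'bdd : ∀ x : ℝ, |deriv σ x| ≤ K)
    (hσ'lip : LipschitzWith (Real.toNNReal K) (deriv σ))
    (Φ : Set (Lp ℝ 2 μ))
    (hΦesbdd : ∀ φ ∈ Φ, MemLp (φ : EuclideanSpace ℝ (Fin d') → ℝ) ⊤ μ)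
    (hΦstar : ∀ φ ∈ Φ, ∀ c : ℝ, 0 ≤ c → c ≤ 1 → c • φ ∈ Φ)
    (hdense : Dense ((Submodule.span ℝ Φ : Submodule ℝ (Lp ℝ 2 μ)) : Set (Lp ℝ 2 μ))) :
    Dense ((Submodule.span ℝ
        {g : Lp ℝ 2 μ | ∃ φ ∈ Φ,
          (g : EuclideanSpace ℝ (Fin d') → ℝ) =ᵐ[μ] fun x => σ (φ x)} :
        Submodule ℝ (Lp ℝ 2 μ)) : Set (Lp ℝ 2 μ)) :=
  statement0_general d' μ σ K hσbdd hσdiff hσ0 hσ'0 hσ'lip Φ hΦesbdd hΦstar hdense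
end

section
/- Let σ : ℝ → ℝ be measurable with |σ| ≤ K for some K > 0, let h : Θ × ℝ^d → ℝ be jointly measurable, and fix R > 0. Assume the family {σ(h(θ,·))}_{θ} is total in the almost-everywhere sense: every g ∈ L²(μ) satisfying ∫ g(x) σ(h(θ,x)) dμ(x) = 0 for P-almost every θ vanishes μ-almost everywhere. Then the linear span of the set of functions { x ↦ ∫_Θ f(θ) σ(h(θ,x)) dP(θ) : f ∈ L_R^∞(P) } is dense in L²(μ). -/
/-!
If `g ∈ L²(μ)` is orthogonal to the span, then by Fubini `T θ = ∫ g(x) σ(h(θ,x)) dμ(x)`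
satisfies `∫ f T dP = 0` for every measurable `f` with `|f| ≤ R`. Taking `f = R · 1_s` shows
that every set integral of `T` vanishes, so `T = 0` `P`-a.e., and totality gives `g = 0`.
-/

open MeasureTheory

lemma abs_mul_le_of_abs_le {a b A B : ℝ} (ha : |a| ≤ A) (hb : |b| ≤ B) : |a * b| ≤ A * B := by
  rw [abs_mul]
  exact mul_le_mul ha hb (abs_nonneg _) ((abs_nonneg _).trans ha)

lemma MeasureTheory.L2.real_inner_toLp_left {X : Type*} [MeasurableSpace X] {μ : Measure X}
    {f : X → ℝ} (hf : MemLp f 2 μ) (g : Lp ℝ 2 μ) :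
    inner ℝ (hf.toLp f) g = ∫ x, f x * g x ∂μ := by
  rw [L2.inner_def]
  refine integral_congr_ae ?_
  filter_upwards [hf.coeFn_toLp] with x hx
  rw [hx, real_inner_eq_re_inner, RCLike.inner_apply, conj_trivial, RCLike.re_to_real, mul_comm]

section IntegralKernel

variable {Θ X : Type*} [MeasurableSpace Θ] [MeasurableSpace X] {P : Measure Θ} {μ : Measure X}
  {k : Θ × X → ℝ} {K R : ℝ}

lemma memLp_integral_mul_kernel [IsFiniteMeasure P] [IsFiniteMeasure μ] (p : ENNReal)
    (hk : Measurable k) (hkb : ∀ z, |k z| ≤ K) {f : Θ → ℝ} (hf : Measurable f)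
    (hfb : ∀ θ, |f θ| ≤ R) :
    MemLp (fun x => ∫ θ, f θ * k (θ, x) ∂P) p μ := by
  have hmeas : StronglyMeasurable fun x => ∫ θ, f θ * k (θ, x) ∂P :=
    StronglyMeasurable.integral_prod_left'
      (f := fun z : Θ × X => f z.1 * k z) ((hf.comp measurable_fst).mul hk).stronglyMeasurable
  refine MemLp.of_bound hmeas.aestronglyMeasurable (R * K * P.real Set.univ) ?_
  exact .of_forall fun x => norm_integral_le_of_norm_le_const <| .of_forall fun θ =>
    abs_mul_le_of_abs_le (hfb θ) (hkb _)

lemma integrable_integral_mul_kernel [IsFiniteMeasure P] [SFinite μ] (hk : Measurable k)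
    (hkb : ∀ z, |k z| ≤ K) {g : X → ℝ} (hg : Integrable g μ) :
    Integrable (fun θ => ∫ x, g x * k (θ, x) ∂μ) P := by
  have hmeas : AEStronglyMeasurable (fun θ => ∫ x, g x * k (θ, x) ∂μ) P :=
    AEStronglyMeasurable.integral_prod_right' (f := fun z : Θ × X => g z.2 * k z)
      (hg.aestronglyMeasurable.comp_snd.mul hk.aestronglyMeasurable)
  refine Integrable.mono' (integrable_const (∫ x, |g x| * K ∂μ)) hmeas (.of_forall fun θ => ?_)
  refine (norm_integral_le_integral_norm _).trans (integral_mono_of_nonneg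
    (.of_forall fun _ => norm_nonneg _) (hg.abs.mul_const K) (.of_forall fun x => ?_))
  exact abs_mul_le_of_abs_le le_rfl (hkb _)

lemma integral_integral_mul_kernel_comm [IsFiniteMeasure P] [SFinite μ] (hk : Measurable k)
    (hkb : ∀ z, |k z| ≤ K) {f : Θ → ℝ} (hf : Measurable f) (hfb : ∀ θ, |f θ| ≤ R)
    {g : X → ℝ} (hg : Integrable g μ) :
    ∫ x, (∫ θ, f θ * k (θ, x) ∂P) * g x ∂μ = ∫ θ, f θ * ∫ x, g x * k (θ, x) ∂μ ∂P := by
  have hint : Integrable (Function.uncurry fun θ x => f θ * k (θ, x) * g x) (P.prod μ) := by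
    refine Integrable.mono' ((integrable_const (R * K)).mul_prod hg.abs)
      (((hf.comp measurable_fst).mul hk).aestronglyMeasurable.mul
        hg.aestronglyMeasurable.comp_snd) (.of_forall fun z => ?_)
    exact abs_mul_le_of_abs_le (abs_mul_le_of_abs_le (hfb z.1) (hkb z)) le_rfl
  calc ∫ x, (∫ θ, f θ * k (θ, x) ∂P) * g x ∂μ
      = ∫ x, ∫ θ, f θ * k (θ, x) * g x ∂P ∂μ := by simp only [integral_mul_const]
    _ = ∫ θ, ∫ x, f θ * k (θ, x) * g x ∂μ ∂P := (integral_integral_swap hint).symm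
    _ = ∫ θ, f θ * ∫ x, g x * k (θ, x) ∂μ ∂P := by
      simp only [← integral_const_mul, mul_comm, mul_left_comm]

end IntegralKernel

lemma ae_eq_zero_of_forall_integral_mul_eq_zero {Θ : Type*} [MeasurableSpace Θ] {P : Measure Θ}
    {T : Θ → ℝ} (hT : Integrable T P) {R : ℝ} (hR : 0 < R)
    (horth : ∀ f : Θ → ℝ, Measurable f → (∀ θ, |f θ| ≤ R) → ∫ θ, f θ * T θ ∂P = 0) :
    T =ᵐ[P] 0 := by
  refine hT.ae_eq_zero_of_forall_setIntegral_eq_zero fun s hs _ => ?_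
  have hind := horth (s.indicator fun _ => R) (measurable_const.indicator hs) fun θ => by
    by_cases hθ : θ ∈ s <;> simp [hθ, abs_of_pos hR, hR.le]
  simp only [← Set.indicator_mul_left, integral_indicator hs, integral_const_mul] at hind
  exact (mul_eq_zero.mp hind).resolve_left hR.ne'

theorem statement1_general
    (Θ : Type*) [MeasurableSpace Θ] (P : Measure Θ) [IsProbabilityMeasure P]
    (d : ℕ) (μ : Measure (EuclideanSpace ℝ (Fin d))) [IsProbabilityMeasure μ]
    (σ : ℝ → ℝ) (hσmeas : Measurable σ)
    (K : ℝ) (hσbdd : ∀ x : ℝ, |σ x| ≤ K)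
    (h : Θ × EuclideanSpace ℝ (Fin d) → ℝ) (hmeas : Measurable h)
    (R : ℝ) (hR : 0 < R)
    (htotal : ∀ g : EuclideanSpace ℝ (Fin d) → ℝ, MemLp g 2 μ →
      (∀ᵐ θ ∂P, ∫ x, g x * σ (h (θ, x)) ∂μ = 0) → g =ᵐ[μ] 0) :
    Dense ((Submodule.span ℝ
        {F : Lp ℝ 2 μ | ∃ f : Θ → ℝ, Measurable f ∧ (∀ θ, |f θ| ≤ R) ∧
          (F : EuclideanSpace ℝ (Fin d) → ℝ) =ᵐ[μ]
            fun x => ∫ θ, f θ * σ (h (θ, x)) ∂P} :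
        Submodule ℝ (Lp ℝ 2 μ)) : Set (Lp ℝ 2 μ)) := by
  rw [Submodule.dense_iff_topologicalClosure_eq_top, Submodule.topologicalClosure_eq_top_iff,
    Submodule.eq_bot_iff]
  intro g hg
  have hk : Measurable fun z => σ (h z) := hσmeas.comp hmeas
  have hkb : ∀ z, |σ (h z)| ≤ K := fun z => hσbdd _
  have hg_int : Integrable g μ := (Lp.memLp g).integrable one_le_two
  refine (Lp.eq_zero_iff_ae_eq_zero).mpr (htotal _ (Lp.memLp g) ?_)
  refine ae_eq_zero_of_forall_integral_mul_eq_zero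
    (integrable_integral_mul_kernel hk hkb hg_int) hR fun f hf hfb => ?_
  have hF := memLp_integral_mul_kernel 2 (P := P) (μ := μ) hk hkb hf hfb
  have horth : inner ℝ (hF.toLp _) g = 0 :=
    (Submodule.mem_orthogonal _ g).mp hg _ (Submodule.subset_span ⟨f, hf, hfb, hF.coeFn_toLp⟩)
  rwa [L2.real_inner_toLp_left, integral_integral_mul_kernel_comm hk hkb hf hfb hg_int] at horth

/-- If the family `{σ(h(θ,·))}_θ` is total in the a.e. sense (every
`g ∈ L²(μ)` orthogonal to `σ(h(θ,·))` for `P`-a.e. `θ` vanishes `μ`-a.e.), then the linear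
span of `{x ↦ ∫ f(θ) σ(h(θ,x)) dP(θ) : f ∈ L_R^∞(P)}` is dense in `L²(μ)`. -/
theorem statement1
    (Θ : Type*) [MeasurableSpace Θ] (P : Measure Θ) [IsProbabilityMeasure P]
    (d : ℕ) (μ : Measure (EuclideanSpace ℝ (Fin d))) [IsProbabilityMeasure μ]
    (σ : ℝ → ℝ) (hσmeas : Measurable σ)
    (K : ℝ) (hK : 0 < K) (hσbdd : ∀ x : ℝ, |σ x| ≤ K)
    (h : Θ × EuclideanSpace ℝ (Fin d) → ℝ) (hmeas : Measurable h)
    (R : ℝ) (hR : 0 < R)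
    (htotal : ∀ g : EuclideanSpace ℝ (Fin d) → ℝ, MemLp g 2 μ →
      (∀ᵐ θ ∂P, ∫ x, g x * σ (h (θ, x)) ∂μ = 0) → g =ᵐ[μ] 0) :
    Dense ((Submodule.span ℝ
        {F : Lp ℝ 2 μ | ∃ f : Θ → ℝ, Measurable f ∧ (∀ θ, |f θ| ≤ R) ∧
          (F : EuclideanSpace ℝ (Fin d) → ℝ) =ᵐ[μ]
            fun x => ∫ θ, f θ * σ (h (θ, x)) ∂P} :
        Submodule ℝ (Lp ℝ 2 μ)) : Set (Lp ℝ 2 μ)) :=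
  statement1_general Θ P d μ σ hσmeas K hσbdd h hmeas R hR htotal
end

section
/- Assume: (a) σ is bounded by K, K-Lipschitz, differentiable with σ(0) = 0 and σ′(0) ≠ 0, and its derivative is K-bounded and K-Lipschitz; (b) universal approximation: every g ∈ L²(ν₀) with ∫ g(x) σ(u·x) dν₀(x) = 0 for all u ∈ ℝ^d vanishes ν₀-almost everywhere; (c) diversity: for every u₁ ∈ ℝ^d, every u₂, u₃ ∈ L_R^∞(P), and every ε > 0, one has P({θ : ‖w(θ) − u₁‖ < ε, ‖W(·,θ) − u₂‖_{L²(P)} < ε, and ‖W(θ,·) − u₃‖_{L²(P)} < ε}) > 0. Then every g ∈ L²(ν₀) satisfying ∫ g(y) G(θ; y, 0) dν₀(y) = 0 for P-almost every θ vanishes ν₀-almost everywhere; equivalently, for every measurable S ⊆ Θ with P(S) = 1, the linear span of {G(θ; ·, 0) : θ ∈ S} is dense in L²(ν₀). -/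
open MeasureTheory

/-- The unrolled recurrent-network features, parameterized by the number `j` of remaining
unrolling steps: `Gnet P T σ w W j` corresponds to `G(·; ·, L − j)` of the paper, i.e.
`Gnet ... 0 θ y = σ(w(θ)·y)` (level `k = L`) and
`Gnet ... (j+1) θ y = σ(∫ W(θ,θ') Gnet ... j θ' y dP(θ') + w(θ)·T^[j+1](y))`
(level `k = L − (j+1)`, where `T^{L−k} = T^[j+1]`). -/
noncomputable def Gnet {Θ : Type*} [MeasurableSpace Θ] (P : Measure Θ) {d : ℕ}
    (T : EuclideanSpace ℝ (Fin d) → EuclideanSpace ℝ (Fin d))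
    (σ : ℝ → ℝ) (w : Θ → EuclideanSpace ℝ (Fin d)) (W : Θ → Θ → ℝ) :
    ℕ → Θ → EuclideanSpace ℝ (Fin d) → ℝ
  | 0, θ, y => σ (inner ℝ (w θ) y)
  | (j + 1), θ, y =>
      σ ((∫ θ', W θ θ' * Gnet P T σ w W j θ' y ∂P) + inner ℝ (w θ) (T^[j + 1] y))

open Filter Topology
open scoped NNReal

/-!
Let `φⱼ(θ) = ∫ g(y) Gⱼ(θ; y) dν₀(y)`, where `Gⱼ = Gnet … j` has `j` unrolling steps left, and
suppose `φⱼ₊₁ = 0` a.e. By diversity, for every `u` with `|u| ≤ R` the recurrent input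
`y ↦ ∫ u(θ') Gⱼ(θ'; y) dP(θ')` is the pointwise limit of the pre-activations of features
`Gⱼ₊₁(θₙ; ·)` with `φⱼ₊₁(θₙ) = 0`, so by dominated convergence `g` is orthogonal to `σ` of it.
Replacing `u` by `t u` with `t → 0⁺`, the conditions `σ(0) = 0` and `σ'(0) ≠ 0` linearise this
to orthogonality to the recurrent input itself, which by Fubini reads `∫ u φⱼ dP = 0`; hence
`φⱼ = 0` a.e. Descending from `j = L` gives `φ₀ = 0` a.e.; diversity of `w` then makes `g`
orthogonal to every neuron `σ(u · y)`, and universal approximation gives `g = 0`.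
-/

section Analysis

variable {α : Type*} [MeasurableSpace α] {μ : Measure α}

lemma sq_integral_le_integral_sq [IsProbabilityMeasure μ] {f : α → ℝ} (hf : MemLp f 2 μ) :
    (∫ x, f x ∂μ) ^ 2 ≤ ∫ x, f x ^ 2 ∂μ := by
  have := ProbabilityTheory.variance_nonneg f μ
  rw [ProbabilityTheory.variance_eq_sub hf, sub_nonneg] at this
  simpa using this

lemma exists_seq_of_ae_of_forall_measure_pos {p : α → Prop} {q : ℕ → α → Prop}
    (hp : ∀ᵐ x ∂μ, p x) (hq : ∀ n, 0 < μ {x | q n x}) :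
    ∃ xs : ℕ → α, ∀ n, q n (xs n) ∧ p (xs n) := by
  choose xs hxs using fun n =>
    Measure.exists_mem_of_measure_ne_zero_of_ae (hq n).ne' (ae_restrict_of_ae hp)
  exact ⟨xs, hxs⟩

lemma integral_mul_eq_zero_of_tendsto {ι : Type*} {l : Filter ι} [l.IsCountablyGenerated]
    [l.NeBot] {g : α → ℝ} (hg : Integrable g μ) {F : ι → α → ℝ} {f : α → ℝ} {C : ℝ}
    (hFm : ∀ᶠ i in l, AEStronglyMeasurable (F i) μ) (hFC : ∀ᶠ i in l, ∀ x, |F i x| ≤ C)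
    (hFf : ∀ x, Tendsto (fun i => F i x) l (𝓝 (f x)))
    (hF0 : ∀ᶠ i in l, ∫ x, g x * F i x ∂μ = 0) : ∫ x, g x * f x ∂μ = 0 := by
  have hlim : Tendsto (fun i => ∫ x, g x * F i x ∂μ) l (𝓝 (∫ x, g x * f x ∂μ)) := by
    refine tendsto_integral_filter_of_dominated_convergence (fun x => |g x| * C) ?_ ?_
      (hg.abs.mul_const C) (ae_of_all _ fun x => (hFf x).const_mul (g x))
    · filter_upwards [hFm] with i hi using hg.aestronglyMeasurable.mul hi
    · filter_upwards [hFC] with i hi using ae_of_all _ fun x => by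
        rw [Real.norm_eq_abs, abs_mul]; exact mul_le_mul_of_nonneg_left (hi x) (abs_nonneg _)
  exact tendsto_nhds_unique_of_eventuallyEq hlim tendsto_const_nhds hF0

lemma integral_mul_eq_zero_of_integral_mul_comp_mul_eq_zero {σ : ℝ → ℝ} {K : ℝ≥0} {σ' : ℝ}
    (hσ : LipschitzWith K σ) (hσ0 : σ 0 = 0) (hσ' : HasDerivAt σ σ' 0) (hσ'0 : σ' ≠ 0)
    {g c : α → ℝ} {C : ℝ} (hg : Integrable g μ) (hc : AEStronglyMeasurable c μ)
    (hcC : ∀ x, |c x| ≤ C) (h : ∀ t : ℝ, 0 < t → t ≤ 1 → ∫ x, g x * σ (t * c x) ∂μ = 0) :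
    ∫ x, g x * c x ∂μ = 0 := by
  have hσK : ∀ s, |σ s| ≤ K * |s| := fun s => by
    simpa [hσ0, Real.dist_eq] using hσ.dist_le_mul s 0
  have hsmall : ∀ᶠ t in 𝓝[>] (0 : ℝ), t ∈ Set.Ioc 0 1 := Ioc_mem_nhdsGT zero_lt_one
  -- `t⁻¹ σ (t c)` is the difference quotient of `t ↦ σ (t c)` at `0`
  have key : ∫ x, g x * (σ' * c x) ∂μ = 0 := by
    refine integral_mul_eq_zero_of_tendsto (l := 𝓝[>] 0) (F := fun t x => t⁻¹ * σ (t * c x))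
      (C := K * C) hg (Eventually.of_forall fun t => ?_) ?_ (fun x => ?_) ?_
    · exact (hσ.continuous.comp_aestronglyMeasurable (hc.const_mul t)).const_mul _
    · filter_upwards [hsmall] with t ht x
      calc |t⁻¹ * σ (t * c x)| ≤ t⁻¹ * (K * |t * c x|) := by
            rw [abs_mul, abs_inv, abs_of_pos ht.1]
            exact mul_le_mul_of_nonneg_left (hσK _) (inv_nonneg.2 ht.1.le)
        _ = K * |c x| := by
            rw [abs_mul, abs_of_pos ht.1, mul_left_comm, inv_mul_cancel_left₀ ht.1.ne']
        _ ≤ K * C := mul_le_mul_of_nonneg_left (hcC x) K.2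
    · have hσc : HasDerivAt σ σ' (0 * c x) := by rwa [zero_mul]
      simpa [hσ0] using (hσc.comp 0 (hasDerivAt_mul_const (c x))).tendsto_slope_zero_right
    · filter_upwards [hsmall] with t ht
      simp_rw [mul_left_comm (g _), integral_const_mul, h t ht.1 ht.2, mul_zero]
  simp_rw [mul_left_comm (g _), integral_const_mul] at key
  exact (mul_eq_zero.1 key).resolve_left hσ'0

lemma ae_eq_zero_of_forall_integral_mul_eq_zero_s2 [SigmaFinite μ] {φ : α → ℝ} {R : ℝ}
    (hR : 0 < R) (hφ : Integrable φ μ)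
    (h : ∀ v : α → ℝ, Measurable v → (∀ x, |v x| ≤ R) → ∫ x, v x * φ x ∂μ = 0) :
    φ =ᵐ[μ] 0 := by
  refine ae_eq_zero_of_forall_setIntegral_eq_of_sigmaFinite (fun s _ _ => hφ.integrableOn)
    fun s hs _ => ?_
  have hv := h (s.indicator fun _ => R) (measurable_const.indicator hs) fun x => by
    by_cases hx : x ∈ s <;> simp [hx, abs_of_pos hR, hR.le]
  simp_rw [← Set.indicator_mul_left, integral_indicator hs, integral_const_mul] at hv
  exact (mul_eq_zero.1 hv).resolve_left hR.ne'

end Analysis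

section RecurrentInput

variable {Θ α : Type*} [MeasurableSpace Θ] {P : Measure Θ} {G : Θ → α → ℝ} {C R : ℝ}

noncomputable def recurrentInput (P : Measure Θ) (G : Θ → α → ℝ) (v : Θ → ℝ) (y : α) : ℝ :=
  ∫ θ, v θ * G θ y ∂P

lemma recurrentInput_const_mul (t : ℝ) (v : Θ → ℝ) (y : α) :
    recurrentInput P G (fun θ => t * v θ) y = t * recurrentInput P G v y := by
  simp_rw [recurrentInput, mul_assoc, integral_const_mul]

lemma recurrentInput_sub {y : α} (hG : AEStronglyMeasurable (fun θ => G θ y) P)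
    (hGC : ∀ θ y, |G θ y| ≤ C) {u v : Θ → ℝ} (hu : Integrable u P) (hv : Integrable v P) :
    recurrentInput P G (fun θ => v θ - u θ) y =
      recurrentInput P G v y - recurrentInput P G u y := by
  have hGC' : ∀ᵐ θ ∂P, ‖G θ y‖ ≤ C := ae_of_all _ fun θ => hGC θ y
  simp_rw [recurrentInput, sub_mul]
  exact integral_sub (hv.mul_bdd hG hGC') (hu.mul_bdd hG hGC')

lemma abs_recurrentInput_le [IsProbabilityMeasure P] (hGC : ∀ θ y, |G θ y| ≤ C) {v : Θ → ℝ}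
    (hvR : ∀ θ, |v θ| ≤ R) (y : α) : |recurrentInput P G v y| ≤ R * C := by
  have hR : 0 ≤ R := (abs_nonneg _).trans (hvR (nonempty_of_isProbabilityMeasure P).some)
  have h := norm_integral_le_of_norm_le_const (μ := P) (C := R * C) <|
    Eventually.of_forall fun θ => by
      rw [Real.norm_eq_abs, abs_mul]; exact mul_le_mul (hvR θ) (hGC θ y) (abs_nonneg _) hR
  rwa [probReal_univ, mul_one] at h

lemma abs_recurrentInput_le_mul_sqrt [IsProbabilityMeasure P] (hGC : ∀ θ y, |G θ y| ≤ C)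
    {y : α} (hG : AEStronglyMeasurable (fun θ => G θ y) P) {v : Θ → ℝ} (hv : MemLp v 2 P) :
    |recurrentInput P G v y| ≤ C * √(∫ θ, v θ ^ 2 ∂P) := by
  have hC : 0 ≤ C := (abs_nonneg _).trans (hGC (nonempty_of_isProbabilityMeasure P).some y)
  have hvG : MemLp (fun θ => v θ * G θ y) 2 P :=
    hv.of_le_mul (hv.aestronglyMeasurable.mul hG) (ae_of_all _ fun θ => by
      rw [norm_mul, mul_comm, Real.norm_eq_abs (G θ y)]
      exact mul_le_mul_of_nonneg_right (hGC θ y) (norm_nonneg _))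
  have hsq : ∀ θ, (v θ * G θ y) ^ 2 ≤ C ^ 2 * v θ ^ 2 := fun θ => by
    rw [mul_pow, mul_comm]
    exact mul_le_mul_of_nonneg_right (sq_le_sq' (abs_le.1 (hGC θ y)).1 (abs_le.1 (hGC θ y)).2)
      (sq_nonneg _)
  calc |recurrentInput P G v y| ≤ √(∫ θ, (v θ * G θ y) ^ 2 ∂P) :=
        Real.abs_le_sqrt (sq_integral_le_integral_sq hvG)
    _ ≤ √(∫ θ, C ^ 2 * v θ ^ 2 ∂P) :=
        Real.sqrt_le_sqrt (integral_mono hvG.integrable_sq (hv.integrable_sq.const_mul _) hsq)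
    _ = C * √(∫ θ, v θ ^ 2 ∂P) := by
        rw [integral_const_mul, Real.sqrt_mul (sq_nonneg C), Real.sqrt_sq hC]

variable [MeasurableSpace α]

lemma measurable_recurrentInput [SFinite P] (hG : Measurable (Function.uncurry G)) {v : Θ → ℝ}
    (hv : Measurable v) : Measurable (recurrentInput P G v) := by
  have : Measurable fun q : α × Θ => v q.2 * G q.2 q.1 :=
    (hv.comp measurable_snd).mul (hG.comp measurable_swap)
  exact this.stronglyMeasurable.integral_prod_right'.measurable

variable {ν : Measure α} {g : α → ℝ}

lemma integrable_prod_mul_of_abs_le [IsFiniteMeasure P] (hg : Integrable g ν)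
    (hG : Measurable (Function.uncurry G)) (hGC : ∀ θ y, |G θ y| ≤ C) :
    Integrable (fun p : α × Θ => g p.1 * G p.2 p.1) (ν.prod P) := by
  refine (hg.abs.mul_prod (integrable_const C)).mono'
    (hg.aestronglyMeasurable.comp_fst.mul (hG.comp measurable_swap).aestronglyMeasurable)
    (ae_of_all _ fun p => ?_)
  rw [Real.norm_eq_abs, abs_mul]
  exact mul_le_mul_of_nonneg_left (hGC _ _) (abs_nonneg _)

lemma integrable_integral_mul [SFinite ν] [IsFiniteMeasure P] (hg : Integrable g ν)
    (hG : Measurable (Function.uncurry G)) (hGC : ∀ θ y, |G θ y| ≤ C) :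
    Integrable (fun θ => ∫ y, g y * G θ y ∂ν) P :=
  (integrable_prod_mul_of_abs_le hg hG hGC).integral_prod_right

lemma integral_mul_recurrentInput [SFinite ν] [IsProbabilityMeasure P] (hg : Integrable g ν)
    (hG : Measurable (Function.uncurry G)) (hGC : ∀ θ y, |G θ y| ≤ C) {v : Θ → ℝ}
    (hv : Measurable v) (hvR : ∀ θ, |v θ| ≤ R) :
    ∫ y, g y * recurrentInput P G v y ∂ν = ∫ θ, v θ * ∫ y, g y * G θ y ∂ν ∂P := by
  have hvG : Measurable (Function.uncurry fun θ y => v θ * G θ y) :=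
    (hv.comp measurable_fst).mul hG
  have hvGC : ∀ θ y, |v θ * G θ y| ≤ R * C := fun θ y => by
    rw [abs_mul]
    exact mul_le_mul (hvR θ) (hGC θ y) (abs_nonneg _) ((abs_nonneg _).trans (hvR θ))
  have := integral_integral_swap (f := fun y θ => g y * (v θ * G θ y))
    (integrable_prod_mul_of_abs_le (P := P) hg hvG hvGC)
  simp_rw [recurrentInput, ← integral_const_mul]
  exact this.trans <| integral_congr_ae <| ae_of_all _ fun θ =>
    integral_congr_ae <| ae_of_all _ fun y => mul_left_comm _ _ _

end RecurrentInput

section Neurons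

variable {Θ E : Type*} [MeasurableSpace Θ] {P : Measure Θ} [NormedAddCommGroup E]
  [InnerProductSpace ℝ E] [MeasurableSpace E] [OpensMeasurableSpace E] {ν : Measure E}

lemma integral_mul_comp_inner_eq_zero {σ : ℝ → ℝ} {C : ℝ} (hσ : Continuous σ)
    (hσC : ∀ x, |σ x| ≤ C) {w : Θ → E}
    (hw : ∀ u : E, ∀ ε : ℝ, 0 < ε → 0 < P {θ | ‖w θ - u‖ < ε}) {g : E → ℝ}
    (hg : Integrable g ν) (h : ∀ᵐ θ ∂P, ∫ y, g y * σ (inner ℝ (w θ) y) ∂ν = 0)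
    (u : E) : ∫ y, g y * σ (inner ℝ u y) ∂ν = 0 := by
  obtain ⟨θs, hθs⟩ := exists_seq_of_ae_of_forall_measure_pos h fun n =>
    hw u (1 / ((n : ℝ) + 1)) Nat.one_div_pos_of_nat
  have hlim : Tendsto (fun n => w (θs n)) atTop (𝓝 u) :=
    tendsto_iff_norm_sub_tendsto_zero.2 <| squeeze_zero (fun _ => norm_nonneg _)
      (fun n => (hθs n).1.le) tendsto_one_div_add_atTop_nhds_zero_nat
  have hneuron : ∀ v : E, Continuous fun y => σ (inner ℝ v y) :=
    fun v => hσ.comp (continuous_const.inner continuous_id)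
  exact integral_mul_eq_zero_of_tendsto (l := atTop) hg
    (Eventually.of_forall fun n => (hneuron _).aestronglyMeasurable)
    (Eventually.of_forall fun n y => hσC _)
    (fun y => (hσ.tendsto _).comp (hlim.inner tendsto_const_nhds))
    (Eventually.of_forall fun n => (hθs n).2)

end Neurons

section Gnet

variable {Θ : Type*} [MeasurableSpace Θ] {P : Measure Θ} {d : ℕ}
  {T : EuclideanSpace ℝ (Fin d) → EuclideanSpace ℝ (Fin d)} {σ : ℝ → ℝ}
  {w : Θ → EuclideanSpace ℝ (Fin d)} {W : Θ → Θ → ℝ} {C R : ℝ}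
  {ν : Measure (EuclideanSpace ℝ (Fin d))} {g : EuclideanSpace ℝ (Fin d) → ℝ}

lemma Gnet_succ (j : ℕ) (θ : Θ) (y : EuclideanSpace ℝ (Fin d)) :
    Gnet P T σ w W (j + 1) θ y =
      σ (recurrentInput P (Gnet P T σ w W j) (W θ) y + inner ℝ (w θ) (T^[j + 1] y)) :=
  rfl

lemma abs_Gnet_le (hσC : ∀ x, |σ x| ≤ C) (j : ℕ) (θ : Θ) (y : EuclideanSpace ℝ (Fin d)) :
    |Gnet P T σ w W j θ y| ≤ C := by
  cases j <;> exact hσC _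

lemma measurable_Gnet [SFinite P] (hσ : Continuous σ) (hT : Measurable T) (hw : Measurable w)
    (hW : Measurable (Function.uncurry W)) (j : ℕ) :
    Measurable (Function.uncurry (Gnet P T σ w W j)) := by
  induction j with
  | zero => exact hσ.measurable.comp ((hw.comp measurable_fst).inner measurable_snd)
  | succ j ih =>
    have hinput : Measurable fun p : Θ × EuclideanSpace ℝ (Fin d) =>
        recurrentInput P (Gnet P T σ w W j) (W p.1) p.2 := by
      have : Measurable fun q : (Θ × EuclideanSpace ℝ (Fin d)) × Θ =>
          W q.1.1 q.2 * Gnet P T σ w W j q.2 q.1.2 :=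
        (hW.comp (measurable_fst.fst.prodMk measurable_snd)).mul
          (ih.comp (measurable_snd.prodMk measurable_fst.snd))
      exact this.stronglyMeasurable.integral_prod_right'.measurable
    exact hσ.measurable.comp <| hinput.add <|
      (hw.comp measurable_fst).inner ((hT.iterate (j + 1)).comp measurable_snd)

lemma integral_mul_comp_recurrentInput_eq_zero [IsProbabilityMeasure P] (hσ : Continuous σ)
    (hσC : ∀ x, |σ x| ≤ C) (hT : Measurable T) (hw : Measurable w)
    (hW : Measurable (Function.uncurry W)) (hWR : ∀ θ θ', |W θ θ'| ≤ R)
    (hdiv : ∀ u : Θ → ℝ, Measurable u → (∀ θ, |u θ| ≤ R) → ∀ ε : ℝ, 0 < ε →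
      0 < P {θ | ‖w θ‖ < ε ∧ √(∫ θ', (W θ θ' - u θ') ^ 2 ∂P) < ε})
    (hg : Integrable g ν) {j : ℕ}
    (hj : ∀ᵐ θ ∂P, ∫ y, g y * Gnet P T σ w W (j + 1) θ y ∂ν = 0)
    {u : Θ → ℝ} (hu : Measurable u) (huR : ∀ θ, |u θ| ≤ R) :
    ∫ y, g y * σ (recurrentInput P (Gnet P T σ w W j) u y) ∂ν = 0 := by
  obtain ⟨θs, hθs⟩ := exists_seq_of_ae_of_forall_measure_pos hj fun n =>
    hdiv u hu huR (1 / ((n : ℝ) + 1)) Nat.one_div_pos_of_nat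
  have hC : 0 ≤ C := (abs_nonneg _).trans (hσC 0)
  have hε := tendsto_one_div_add_atTop_nhds_zero_nat (𝕜 := ℝ)
  have hG := measurable_Gnet (P := P) hσ hT hw hW
  have hw0 : Tendsto (fun n => w (θs n)) atTop (𝓝 0) :=
    squeeze_zero_norm (fun n => (hθs n).1.1.le) hε
  have hinput : ∀ y, Tendsto (fun n => recurrentInput P (Gnet P T σ w W j) (W (θs n)) y)
      atTop (𝓝 (recurrentInput P (Gnet P T σ w W j) u y)) := by
    intro y
    have hGy : Measurable fun θ => Gnet P T σ w W j θ y :=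
      (hG j).comp measurable_prodMk_right
    refine tendsto_iff_norm_sub_tendsto_zero.2 <|
      squeeze_zero (fun _ => norm_nonneg _) (fun n => ?_) (mul_zero C ▸ hε.const_mul C)
    have hWn : Measurable (W (θs n)) := hW.comp measurable_prodMk_left
    have hWu : ∀ θ, |W (θs n) θ - u θ| ≤ R + R :=
      fun θ => (abs_sub _ _).trans (add_le_add (hWR _ _) (huR θ))
    rw [Real.norm_eq_abs, ← recurrentInput_sub hGy.aestronglyMeasurable (abs_Gnet_le hσC j)
      (.of_bound hu.aestronglyMeasurable R (ae_of_all _ huR))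
      (.of_bound hWn.aestronglyMeasurable R (ae_of_all _ (hWR _)))]
    calc _ ≤ C * √(∫ θ, (W (θs n) θ - u θ) ^ 2 ∂P) :=
          abs_recurrentInput_le_mul_sqrt (abs_Gnet_le hσC j) hGy.aestronglyMeasurable
            (.of_bound (hWn.sub hu).aestronglyMeasurable _ (ae_of_all _ hWu))
      _ ≤ C * (1 / ((n : ℝ) + 1)) := mul_le_mul_of_nonneg_left (hθs n).1.2.le hC
  refine integral_mul_eq_zero_of_tendsto (l := atTop)
    (F := fun n => Gnet P T σ w W (j + 1) (θs n)) hg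
    (Eventually.of_forall fun n => ((hG (j + 1)).comp measurable_prodMk_left).aestronglyMeasurable)
    (Eventually.of_forall fun n => abs_Gnet_le hσC (j + 1) _)
    (fun y => ?_) (Eventually.of_forall fun n => (hθs n).2)
  simpa [Gnet_succ, Function.comp_def] using
    (hσ.tendsto _).comp ((hinput y).add (hw0.inner tendsto_const_nhds))

lemma ae_integral_mul_Gnet_eq_zero_of_succ [IsProbabilityMeasure P] [SFinite ν] {K : ℝ≥0}
    {σ' : ℝ} (hσ : LipschitzWith K σ) (hσ0 : σ 0 = 0) (hσ' : HasDerivAt σ σ' 0) (hσ'0 : σ' ≠ 0)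
    (hσC : ∀ x, |σ x| ≤ C) (hT : Measurable T) (hw : Measurable w)
    (hW : Measurable (Function.uncurry W)) (hWR : ∀ θ θ', |W θ θ'| ≤ R) (hR : 0 < R)
    (hdiv : ∀ u : Θ → ℝ, Measurable u → (∀ θ, |u θ| ≤ R) → ∀ ε : ℝ, 0 < ε →
      0 < P {θ | ‖w θ‖ < ε ∧ √(∫ θ', (W θ θ' - u θ') ^ 2 ∂P) < ε})
    (hg : Integrable g ν) {j : ℕ}
    (hj : ∀ᵐ θ ∂P, ∫ y, g y * Gnet P T σ w W (j + 1) θ y ∂ν = 0) :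
    ∀ᵐ θ ∂P, ∫ y, g y * Gnet P T σ w W j θ y ∂ν = 0 := by
  have hG := measurable_Gnet (P := P) hσ.continuous hT hw hW j
  have hGC := abs_Gnet_le (P := P) (T := T) (w := w) (W := W) hσC j
  refine ae_eq_zero_of_forall_integral_mul_eq_zero_s2 hR (integrable_integral_mul hg hG hGC)
    fun v hv hvR => ?_
  rw [← integral_mul_recurrentInput hg hG hGC hv hvR]
  refine integral_mul_eq_zero_of_integral_mul_comp_mul_eq_zero hσ hσ0 hσ' hσ'0 hg
    (measurable_recurrentInput hG hv).aestronglyMeasurable (abs_recurrentInput_le hGC hvR)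
    fun t ht0 ht1 => ?_
  simp_rw [← recurrentInput_const_mul]
  refine integral_mul_comp_recurrentInput_eq_zero hσ.continuous hσC hT hw hW hWR hdiv hg hj
    (hv.const_mul t) fun θ => ?_
  rw [abs_mul, abs_of_pos ht0]
  exact (mul_le_of_le_one_left (abs_nonneg _) ht1).trans (hvR θ)

end Gnet

theorem statement2_general
    (Θ : Type*) [MeasurableSpace Θ] (P : Measure Θ) [IsProbabilityMeasure P]
    (d : ℕ) (T : EuclideanSpace ℝ (Fin d) → EuclideanSpace ℝ (Fin d)) (hT : Measurable T)
    (ν₀ : Measure (EuclideanSpace ℝ (Fin d))) [IsProbabilityMeasure ν₀]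
    (L : ℕ) (R K : ℝ) (hR : 0 < R)
    (σ : ℝ → ℝ)
    (hσbdd : ∀ x : ℝ, |σ x| ≤ K) (hσlip : LipschitzWith (Real.toNNReal K) σ)
    (hσdiff : Differentiable ℝ σ) (hσ0 : σ 0 = 0) (hσ'0 : deriv σ 0 ≠ 0)
    (w : Θ → EuclideanSpace ℝ (Fin d)) (hw : Measurable w)
    (W : Θ → Θ → ℝ) (hW : Measurable (Function.uncurry W))
    (hWbdd : ∀ θ θ', |W θ θ'| ≤ R)
    -- (b) universal approximation
    (hUA : ∀ g : EuclideanSpace ℝ (Fin d) → ℝ, MemLp g 2 ν₀ →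
      (∀ u : EuclideanSpace ℝ (Fin d), ∫ x, g x * σ (inner ℝ u x) ∂ν₀ = 0) → g =ᵐ[ν₀] 0)
    -- (c) diversity of the weights
    (hdiv : ∀ (u₁ : EuclideanSpace ℝ (Fin d)) (u₂ u₃ : Θ → ℝ),
      Measurable u₂ → (∀ θ, |u₂ θ| ≤ R) → Measurable u₃ → (∀ θ, |u₃ θ| ≤ R) →
      ∀ ε : ℝ, 0 < ε →
        0 < P {θ | ‖w θ - u₁‖ < ε ∧
          Real.sqrt (∫ θ', (W θ' θ - u₂ θ') ^ 2 ∂P) < ε ∧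
          Real.sqrt (∫ θ', (W θ θ' - u₃ θ') ^ 2 ∂P) < ε}) :
    ∀ g : EuclideanSpace ℝ (Fin d) → ℝ, MemLp g 2 ν₀ →
      (∀ᵐ θ ∂P, ∫ y, g y * Gnet P T σ w W L θ y ∂ν₀ = 0) → g =ᵐ[ν₀] 0 := by
  intro g hg hL
  have hg1 : Integrable g ν₀ := hg.integrable one_le_two
  have hR0 : ∀ θ : Θ, |(0 : ℝ)| ≤ R := fun _ => by simpa using hR.le
  have hdivRecurrent : ∀ u : Θ → ℝ, Measurable u → (∀ θ, |u θ| ≤ R) → ∀ ε : ℝ, 0 < ε →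
      0 < P {θ | ‖w θ‖ < ε ∧ √(∫ θ', (W θ θ' - u θ') ^ 2 ∂P) < ε} := fun u hu huR ε hε =>
    (hdiv 0 _ u measurable_const hR0 hu huR ε hε).trans_le
      (measure_mono fun θ hθ => ⟨by simpa using hθ.1, hθ.2.2⟩)
  have hdivInput : ∀ (u : EuclideanSpace ℝ (Fin d)) (ε : ℝ), 0 < ε → 0 < P {θ | ‖w θ - u‖ < ε} :=
    fun u ε hε => (hdiv u _ _ measurable_const hR0 measurable_const hR0 ε hε).trans_le
      (measure_mono fun θ hθ => hθ.1)
  have h0 : ∀ᵐ θ ∂P, ∫ y, g y * Gnet P T σ w W 0 θ y ∂ν₀ = 0 := by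
    induction L with
    | zero => exact hL
    | succ j ih => exact ih (ae_integral_mul_Gnet_eq_zero_of_succ hσlip hσ0
        (hσdiff 0).hasDerivAt hσ'0 hσbdd hT hw hW hWbdd hR hdivRecurrent hg1 hL)
  exact hUA g hg (integral_mul_comp_inner_eq_zero hσdiff.continuous hσbdd hdivInput hg1 h0)

/-- Under regularity of `σ`, universal approximation for single neurons, and
diversity of the weights, every `g ∈ L²(ν₀)` orthogonal to the level-0 features
`G(θ; ·, 0)` for `P`-a.e. `θ` vanishes `ν₀`-a.e. -/
theorem statement2
    (Θ : Type*) [MeasurableSpace Θ] (P : Measure Θ) [IsProbabilityMeasure P]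
    (d : ℕ) (T : EuclideanSpace ℝ (Fin d) → EuclideanSpace ℝ (Fin d)) (hT : Measurable T)
    (ν₀ : Measure (EuclideanSpace ℝ (Fin d))) [IsProbabilityMeasure ν₀]
    (hmom : Integrable (fun y => ‖y‖ ^ 2) ν₀)
    (L : ℕ) (R K : ℝ) (hR : 0 < R) (hRK : R ≤ K)
    (σ : ℝ → ℝ)
    (hσbdd : ∀ x : ℝ, |σ x| ≤ K) (hσlip : LipschitzWith (Real.toNNReal K) σ)
    (hσdiff : Differentiable ℝ σ) (hσ0 : σ 0 = 0) (hσ'0 : deriv σ 0 ≠ 0)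
    (hσ'bdd : ∀ x : ℝ, |deriv σ x| ≤ K)
    (hσ'lip : LipschitzWith (Real.toNNReal K) (deriv σ))
    (w : Θ → EuclideanSpace ℝ (Fin d)) (hw : Measurable w)
    (W : Θ → Θ → ℝ) (hW : Measurable (Function.uncurry W))
    (hWbdd : ∀ θ θ', |W θ θ'| ≤ R)
    -- (b) universal approximation
    (hUA : ∀ g : EuclideanSpace ℝ (Fin d) → ℝ, MemLp g 2 ν₀ →
      (∀ u : EuclideanSpace ℝ (Fin d), ∫ x, g x * σ (inner ℝ u x) ∂ν₀ = 0) → g =ᵐ[ν₀] 0)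
    -- (c) diversity of the weights
    (hdiv : ∀ (u₁ : EuclideanSpace ℝ (Fin d)) (u₂ u₃ : Θ → ℝ),
      Measurable u₂ → (∀ θ, |u₂ θ| ≤ R) → Measurable u₃ → (∀ θ, |u₃ θ| ≤ R) →
      ∀ ε : ℝ, 0 < ε →
        0 < P {θ | ‖w θ - u₁‖ < ε ∧
          Real.sqrt (∫ θ', (W θ' θ - u₂ θ') ^ 2 ∂P) < ε ∧
          Real.sqrt (∫ θ', (W θ θ' - u₃ θ') ^ 2 ∂P) < ε}) :
    ∀ g : EuclideanSpace ℝ (Fin d) → ℝ, MemLp g 2 ν₀ →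
      (∀ᵐ θ ∂P, ∫ y, g y * Gnet P T σ w W L θ y ∂ν₀ = 0) → g =ᵐ[ν₀] 0 :=
  statement2_general Θ P d T hT ν₀ L R K hR σ hσbdd hσlip hσdiff hσ0 hσ'0 w hw W hW hWbdd hUA hdiv
end

section
/- Let (X, d) be a metric space, F : X → X, and let a, b, c, T ≥ 0 and k > 0 be constants. Suppose that for every integer m ≥ 1 and all x, y ∈ X, d(F^{[m]}(x), F^{[m]}(y)) ≤ ((a(1+√m)T)^m / m!) · d(x, y) + c·exp(b(1+√m) − k·m). Then F has at most one fixed point, and for every x ∈ X the sequence of iterates (F^{[m]}(x))_{m ≥ 0} is a Cauchy sequence. -/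
/-!
The hypothesis has the shape `d(F^[m] x, F^[m] y) ≤ u m * d(x, y) + v m` with `u` and `v`
summable. For `u` this is the estimate `(A(1 + √m))^m / m! ≤ (4A)^m / ⌊m/2⌋!`, which comes from
`m^⌈m/2⌉ ⌊m/2⌋! ≤ 2^⌈m/2⌉ m!`; for `v` it is `b√m ≤ b²/(2k) + km/2`, which makes `v` decay
geometrically. Two fixed points then satisfy `d(x, y) ≤ u m * d(x, y) + v m → 0`, and consecutive
iterates `F^[m] x`, `F^[m] (F x)` lie at summable distances.
-/

open Real Filter Topology Function Nat

section Iteration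

variable {X : Type*} [MetricSpace X] {F : X → X} {u v : ℕ → ℝ}

theorem eq_of_isFixedPt_of_dist_iterate_le (hu : Tendsto u atTop (𝓝 0))
    (hv : Tendsto v atTop (𝓝 0)) {x y : X}
    (h : ∀ᶠ m in atTop, dist (F^[m] x) (F^[m] y) ≤ u m * dist x y + v m)
    (hx : IsFixedPt F x) (hy : IsFixedPt F y) : x = y := by
  have hlim : Tendsto (fun m => u m * dist x y + v m) atTop (𝓝 0) := by
    simpa using (hu.mul_const (dist x y)).add hv
  refine dist_le_zero.mp (ge_of_tendsto hlim (h.mono fun m hm => ?_))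
  rwa [(hx.iterate m).eq, (hy.iterate m).eq] at hm

theorem cauchySeq_iterate_of_dist_iterate_le (hu : Summable u) (hv : Summable v) {x : X}
    (h : ∀ᶠ m in atTop, dist (F^[m] x) (F^[m] (F x)) ≤ u m * dist x (F x) + v m) :
    CauchySeq fun m => F^[m] x := by
  obtain ⟨N, hN⟩ := eventually_atTop.mp h
  rw [← cauchySeq_shift N]
  refine cauchySeq_of_dist_le_of_summable (fun n => u (n + N) * dist x (F x) + v (n + N))
    (fun n => ?_)
    ((((summable_nat_add_iff N).mpr hu).mul_right _).add ((summable_nat_add_iff N).mpr hv))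
  rw [Nat.succ_add, iterate_succ_apply]
  exact hN _ (Nat.le_add_left N n)

end Iteration

theorem pow_mul_factorial_half_le (m : ℕ) : m ^ (m - m / 2) * (m / 2)! ≤ 2 ^ (m - m / 2) * m ! :=
  calc m ^ (m - m / 2) * (m / 2)! ≤ (2 * (m / 2 + 1)) ^ (m - m / 2) * (m / 2)! := by
        gcongr; omega
    _ = 2 ^ (m - m / 2) * ((m / 2)! * (m / 2 + 1) ^ (m - m / 2)) := by rw [mul_pow]; ring
    _ ≤ 2 ^ (m - m / 2) * (m / 2 + (m - m / 2))! := by gcongr; exact factorial_mul_pow_le_factorial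
    _ = 2 ^ (m - m / 2) * m ! := by rw [Nat.add_sub_cancel' (Nat.div_le_self m 2)]

theorem pow_one_add_sqrt_div_factorial_le {A : ℝ} (hA : 0 ≤ A) (m : ℕ) :
    (A * (1 + √m)) ^ m / m ! ≤ (4 * A) ^ m / (m / 2)! := by
  rcases Nat.eq_zero_or_pos m with rfl | hm
  · simp
  rw [div_le_div_iff₀ (by positivity) (by positivity)]
  have hsqrt : 1 ≤ √(m : ℝ) := one_le_sqrt.mpr (by exact_mod_cast hm)
  have hfact : √(m : ℝ) ^ m * (m / 2)! ≤ 2 ^ (m - m / 2) * m ! :=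
    calc √(m : ℝ) ^ m * (m / 2)! ≤ √(m : ℝ) ^ (2 * (m - m / 2)) * (m / 2)! := by
          gcongr; omega
      _ = (m : ℝ) ^ (m - m / 2) * (m / 2)! := by rw [pow_mul, sq_sqrt (Nat.cast_nonneg m)]
      _ ≤ 2 ^ (m - m / 2) * m ! := by exact_mod_cast pow_mul_factorial_half_le m
  have hbase : A * (1 + √m) ≤ 2 * A * √m := by nlinarith
  calc (A * (1 + √m)) ^ m * (m / 2)! ≤ (2 * A) ^ m * (√m ^ m * (m / 2)!) := by
        rw [← mul_assoc, ← mul_pow]; gcongr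
    _ ≤ (2 * A) ^ m * (2 ^ (m - m / 2) * m !) := by gcongr
    _ ≤ (2 * A) ^ m * 2 ^ m * m ! := by
        rw [← mul_assoc]; gcongr; exacts [one_le_two, Nat.sub_le m (m / 2)]
    _ = (4 * A) ^ m * m ! := by rw [← mul_pow]; ring_nf

theorem summable_pow_div_factorial_half (x : ℝ) : Summable fun m : ℕ => x ^ m / (m / 2)! := by
  have heven : ∀ j, (2 * j) / 2 = j := fun j => by omega
  have hodd : ∀ j, (2 * j + 1) / 2 = j := fun j => by omega
  refine Summable.even_add_odd ?_ ?_
  · exact (Real.summable_pow_div_factorial (x ^ 2)).congr fun j => by rw [heven, pow_mul]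
  · refine ((Real.summable_pow_div_factorial (x ^ 2)).mul_right x).congr fun j => ?_
    rw [hodd, pow_succ x (2 * j), pow_mul]
    ring

theorem summable_pow_one_add_sqrt_div_factorial (A : ℝ) :
    Summable fun m : ℕ => (A * (1 + √m)) ^ m / m ! := by
  refine (summable_pow_div_factorial_half (4 * |A|)).of_norm_bounded fun m => ?_
  have h := pow_one_add_sqrt_div_factorial_le (abs_nonneg A) m
  rwa [Real.norm_eq_abs, abs_div, abs_pow, abs_mul,
    abs_of_nonneg (by positivity : (0 : ℝ) ≤ 1 + √m), Nat.abs_cast]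

theorem summable_exp_mul_one_add_sqrt_sub_mul (b : ℝ) {k : ℝ} (hk : 0 < k) :
    Summable fun m : ℕ => exp (b * (1 + √m) - k * m) := by
  refine .of_nonneg_of_le (fun _ => (exp_pos _).le) (fun m => ?_)
    ((summable_geometric_of_lt_one (exp_pos (-(k / 2))).le
      (exp_lt_one_iff.mpr (by linarith))).mul_left (exp (b + b ^ 2 / (2 * k))))
  rw [← exp_nat_mul, ← exp_add, exp_le_exp]
  have hsq : √(m : ℝ) ^ 2 = m := sq_sqrt (Nat.cast_nonneg m)
  have hamgm : b * √m ≤ b ^ 2 / (2 * k) + k / 2 * m := by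
    rw [← sub_nonneg]
    have : b ^ 2 / (2 * k) + k / 2 * m - b * √m = (b - k * √m) ^ 2 / (2 * k) := by
      field_simp; linear_combination (-(k ^ 2)) * hsq
    rw [this]; positivity
  nlinarith

theorem statement8_general {X : Type*} [MetricSpace X] (F : X → X)
    (a b c T k : ℝ) (hk : 0 < k)
    (h : ∀ m : ℕ, 1 ≤ m → ∀ x y : X,
      dist (F^[m] x) (F^[m] y)
        ≤ (a * (1 + Real.sqrt m) * T) ^ m / (Nat.factorial m : ℝ) * dist x y +
          c * Real.exp (b * (1 + Real.sqrt m) - k * m)) :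
    (∀ x y : X, F x = x → F y = y → x = y) ∧
      ∀ x : X, CauchySeq (fun m : ℕ => F^[m] x) := by
  have hu : Summable fun m : ℕ => (a * (1 + √m) * T) ^ m / m ! := by
    refine (summable_pow_one_add_sqrt_div_factorial (a * T)).congr fun m => ?_
    ring
  have hv := (summable_exp_mul_one_add_sqrt_sub_mul b hk).mul_left c
  have hbound : ∀ x y, ∀ᶠ m in atTop, dist (F^[m] x) (F^[m] y) ≤
      (a * (1 + √m) * T) ^ m / m ! * dist x y + c * exp (b * (1 + √m) - k * m) :=
    fun x y => (eventually_ge_atTop 1).mono fun m hm => h m hm x y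
  exact ⟨fun x y hx hy => eq_of_isFixedPt_of_dist_iterate_le hu.tendsto_atTop_zero
      hv.tendsto_atTop_zero (hbound x y) hx hy,
    fun x => cauchySeq_iterate_of_dist_iterate_le hu hv (hbound x (F x))⟩

/-- If the iterates of `F : X → X` satisfy
`d(F^[m] x, F^[m] y) ≤ ((a(1+√m)T)^m / m!) d(x,y) + c·exp(b(1+√m) − k·m)` for all `m ≥ 1`,
then `F` has at most one fixed point and every Picard iteration sequence is Cauchy. -/
theorem statement8 {X : Type*} [MetricSpace X] (F : X → X)
    (a b c T k : ℝ) (ha : 0 ≤ a) (hb : 0 ≤ b) (hc : 0 ≤ c) (hT : 0 ≤ T) (hk : 0 < k)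
    (h : ∀ m : ℕ, 1 ≤ m → ∀ x y : X,
      dist (F^[m] x) (F^[m] y)
        ≤ (a * (1 + Real.sqrt m) * T) ^ m / (Nat.factorial m : ℝ) * dist x y +
          c * Real.exp (b * (1 + Real.sqrt m) - k * m)) :
    (∀ x y : X, F x = x → F y = y → x = y) ∧
      ∀ x : X, CauchySeq (fun m : ℕ => F^[m] x) :=
  statement8_general F a b c T k hk h
end
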